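/- arXiv:2107.11530 — 5 statements merged into one kernel-verified Lean document; each statement's English description precedes it below -/
import Mathlib

section
/- Let n and t be positive integers, and let i_1 < i_2 < ... < i_t and j_1 < j_2 < ... < j_t be indices in [1,n] with i_k ≠ j_k for all k. If x is a uniformly random string in {0,1}^n, then the probability that x_{i_k} = x_{j_k} for all k ∈ [t] is exactly 2^{-t}. -/
lemma half_card {α : Type*} [Finite α] (q p : α → Prop) (f : α → α)
    (hf : Function.Involutive f) (hq : ∀ x, q x → q (f x))
    (hp : ∀ x, q x → (p (f x) ↔ ¬ p x)) :
    Nat.card {x // q x ∧ p x} * 2 = Nat.card {x // q x} := by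
  classical
  have e1 : {x // q x ∧ p x} ≃ {x // q x ∧ ¬ p x} :=
    { toFun := fun x => ⟨f x.1, hq _ x.2.1, by
        rw [hp _ x.2.1]; exact not_not_intro x.2.2⟩
      invFun := fun x => ⟨f x.1, hq _ x.2.1, (hp _ x.2.1).mpr x.2.2⟩
      left_inv := fun x => Subtype.ext (hf x.1)
      right_inv := fun x => Subtype.ext (hf x.1) }
  have e2 : {x // q x} ≃ {x // q x ∧ p x} ⊕ {x // q x ∧ ¬ p x} :=
    (Equiv.sumCompl (fun y : {x // q x} => p y.1)).symm.trans
      (Equiv.sumCongr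
        (Equiv.subtypeSubtypeEquivSubtypeInter q p)
        (Equiv.subtypeSubtypeEquivSubtypeInter q (fun x => ¬ p x)))
  rw [Nat.card_congr e2, Nat.card_sum, ← Nat.card_congr e1]
  ring

lemma key_count (n : ℕ) : ∀ t (i j : Fin t → Fin n), StrictMono i → StrictMono j →
    (∀ k, i k ≠ j k) →
    Nat.card {x : Fin n → Bool // ∀ k, x (i k) = x (j k)} * 2 ^ t = 2 ^ n := by
  intro t
  induction t with
  | zero =>
    intro i j _ _ _
    have e : {x : Fin n → Bool // ∀ k : Fin 0, x (i k) = x (j k)} ≃ (Fin n → Bool) :=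
      Equiv.subtypeUnivEquiv (fun x k => k.elim0)
    rw [Nat.card_congr e, Nat.card_eq_fintype_card]
    simp
  | succ t IH =>
    intro i j hi hj hij
    classical
    set L : Fin (t+1) := Fin.last t
    set m : Fin n := max (i L) (j L) with hm
    set f : (Fin n → Bool) → (Fin n → Bool) := fun x => Function.update x m (!x m) with hfdef
    set q : (Fin n → Bool) → Prop := fun x => ∀ k : Fin t, x (i k.castSucc) = x (j k.castSucc)
      with hqdef
    set p : (Fin n → Bool) → Prop := fun x => x (i L) = x (j L) with hpdef
    have hfm : ∀ x a, a ≠ m → f x a = x a := by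
      intro x a ha
      simp [hfdef, Function.update, ha]
    have hfmm : ∀ x, f x m = !x m := by
      intro x; simp [hfdef]
    have hflt : ∀ (k : Fin t), i k.castSucc ≠ m ∧ j k.castSucc ≠ m := by
      intro k
      have h1 : i k.castSucc < i L := hi (Fin.castSucc_lt_last k)
      have h2 : j k.castSucc < j L := hj (Fin.castSucc_lt_last k)
      constructor
      · exact ne_of_lt (lt_of_lt_of_le h1 (le_max_left _ _))
      · exact ne_of_lt (lt_of_lt_of_le h2 (le_max_right _ _))
    have hf : Function.Involutive f := by
      intro x
      funext a
      by_cases ha : a = m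
      · subst ha; rw [hfmm, hfmm, Bool.not_not]
      · rw [hfm _ _ ha, hfm _ _ ha]
    have hq : ∀ x, q x → q (f x) := by
      intro x hx k
      rw [hfm _ _ (hflt k).1, hfm _ _ (hflt k).2]
      exact hx k
    have hp : ∀ x, q x → (p (f x) ↔ ¬ p x) := by
      intro x _
      have hijL := hij L
      rcases max_choice (i L) (j L) with h | h
      · have hjne : j L ≠ m := by rw [hm, h]; exact fun hc => hijL hc.symm
        have him : i L = m := h.symm
        simp only [hpdef]
        rw [hfm _ _ hjne, him, hfmm]
        cases x m <;> cases x (j L) <;> simp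
      · have hine : i L ≠ m := by rw [hm, h]; exact hijL
        have hjm : j L = m := h.symm
        simp only [hpdef]
        rw [hfm _ _ hine, hjm, hfmm]
        cases x m <;> cases x (i L) <;> simp
    have hhalf := half_card q p f hf hq hp
    have eA : {x : Fin n → Bool // ∀ k, x (i k) = x (j k)} ≃ {x // q x ∧ p x} := by
      apply Equiv.subtypeEquivRight
      intro x
      constructor
      · intro h; exact ⟨fun k => h k.castSucc, h L⟩
      · intro h k
        exact Fin.lastCases h.2 h.1 k
    have hIH := IH (fun k => i k.castSucc) (fun k => j k.castSucc)
      (hi.comp Fin.strictMono_castSucc) (hj.comp Fin.strictMono_castSucc)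
      (fun k => hij k.castSucc)
    rw [Nat.card_congr eA]
    calc Nat.card {x // q x ∧ p x} * 2 ^ (t + 1)
        = (Nat.card {x // q x ∧ p x} * 2) * 2 ^ t := by ring
      _ = Nat.card {x // q x} * 2 ^ t := by rw [hhalf]
      _ = 2 ^ n := hIH

/-- For 1 ≤ t, strictly increasing index sequences i, j into [n] with
i_k ≠ j_k for all k, the probability over a uniformly random x ∈ {0,1}^n that
x_{i_k} = x_{j_k} for all k is exactly 2^{-t}. -/
theorem stmt0 (n t : ℕ) (ht : 0 < t) (i j : Fin t → Fin n)
    (hi : StrictMono i) (hj : StrictMono j) (hij : ∀ k, i k ≠ j k) :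
    (Nat.card {x : Fin n → Bool // ∀ k, x (i k) = x (j k)} : ℝ) / 2 ^ n
      = (1 / 2 : ℝ) ^ t := by
  have h := key_count n t i j hi hj hij
  have h' : (Nat.card {x : Fin n → Bool // ∀ k, x (i k) = x (j k)} : ℝ) * 2 ^ t = 2 ^ n := by
    exact_mod_cast congrArg (Nat.cast : ℕ → ℝ) h
  rw [div_pow, one_pow, div_eq_div_iff (by positivity) (by positivity), one_mul]
  linarith
end

section
/- Let t be a positive integer and I, I' ⊆ [1,n] be intervals with |I| ≥ 25t and |I △ I'| ≥ t (symmetric difference of the index sets). Then for a uniformly random x ∈ {0,1}^n, the probability that the edit distance between the subwords x_I and x_{I'} is less than t is at most 2^{-5t}. -/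
/-!
If `d_edit(x_I, x_{I'}) < t`, a longest common subsequence matches the `k`-th element of a
set `S ⊆ I` with the `k`-th element of a set `T ⊆ I'`, where `|S| = |T| = L` exceeds
`(|I| + |I'| - t)/2`, and `x` agrees on matched positions. A matched pair cannot be a fixed
point: the matching would then pin `I'` to `I` up to the `< t` unmatched positions, contradicting
`|I △ I'| ≥ t`. A fixed-point-free increasing matching ties each of `L` distinct positions to a
strictly smaller one, so at most `2^(n - L)` strings satisfy it. A union bound over `(S, T)`,
weighting each set by `64^|S|` and using `∑ 64^|S| = 65^|I|`, gives `2^(-5t)`.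
-/

open Classical

/-- Subword of `x : Fin n → Bool` starting at `a` of length `len`. -/
def subwordF {n : ℕ} (x : Fin n → Bool) (a len : ℕ) : List Bool :=
  (List.range len).map fun k => if h : a + k < n then x ⟨a + k, h⟩ else false

/-- Length of a longest common subsequence of two boolean strings. -/
noncomputable def lcsLen (u v : List Bool) : ℕ :=
  Nat.findGreatest
    (fun k => ∃ w : List Bool, w.length = k ∧ w.Sublist u ∧ w.Sublist v)
    (min u.length v.length)

/-- Edit distance (insertions/deletions): |u| + |v| - 2·|LCS(u,v)|. -/
noncomputable def editDist (u v : List Bool) : ℕ :=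
  u.length + v.length - 2 * lcsLen u v

open Finset

theorem card_filter_forall_eq_le {α β ι : Type*} [Fintype α] [LinearOrder α] [Fintype β]
    [Fintype ι] {f g : ι → α} (hf : Function.Injective f) (hgf : ∀ i, g i < f i) :
    #{x : α → β | ∀ i, x (f i) = x (g i)} ≤
      Fintype.card β ^ (Fintype.card α - Fintype.card ι) := by
  -- `x` is determined by its restriction to the complement of `range f`.
  set V := univ.image f
  have hV : #Vᶜ = Fintype.card α - Fintype.card ι := by
    rw [card_compl, card_image_of_injective _ hf, card_univ]
  rw [← hV, ← Fintype.card_coe Vᶜ, ← Fintype.card_fun, ← card_univ]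
  refine card_le_card_of_injOn (fun x (j : ↥Vᶜ) => x j) (fun _ _ => mem_coe.2 (mem_univ _)) ?_
  intro x hx y hy hxy
  simp only [coe_filter, mem_univ, true_and, Set.mem_ofPred_eq] at hx hy
  funext j
  induction j using WellFoundedLT.induction with
  | _ j ih =>
    by_cases hj : j ∈ V
    · obtain ⟨i, -, rfl⟩ := mem_image.1 hj
      rw [hx i, hy i, ih _ (hgf i)]
    · exact congrFun hxy ⟨j, mem_compl.2 hj⟩

theorem card_large_subsets_mul_pow_le {α : Type*} (U : Finset α) {r : ℕ} (hr : 1 ≤ r)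
    (k : ℕ) :
    #{S ∈ U.powerset | k ≤ #S} * r ^ k ≤ (r + 1) ^ #U :=
  calc #{S ∈ U.powerset | k ≤ #S} * r ^ k = ∑ S ∈ U.powerset with k ≤ #S, r ^ k := by
        rw [sum_const, smul_eq_mul]
    _ ≤ ∑ S ∈ U.powerset with k ≤ #S, r ^ #S :=
        sum_le_sum fun S hS => Nat.pow_le_pow_right hr (mem_filter.1 hS).2
    _ ≤ ∑ S ∈ U.powerset, r ^ #S := sum_le_sum_of_subset (filter_subset _ _)
    _ = (r + 1) ^ #U := by simpa using sum_pow_mul_eq_add_pow r 1 U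

noncomputable def nthSmallest (S : Finset ℕ) (k : ℕ) : ℕ :=
  if hk : k < #S then S.orderEmbOfFin rfl ⟨k, hk⟩ else 0

theorem nthSmallest_mem {S : Finset ℕ} {k : ℕ} (hk : k < #S) : nthSmallest S k ∈ S := by
  rw [nthSmallest, dif_pos hk]
  exact orderEmbOfFin_mem _ _ _

theorem nthSmallest_lt_nthSmallest {S : Finset ℕ} {i j : ℕ} (hij : i < j) (hj : j < #S) :
    nthSmallest S i < nthSmallest S j := by
  rw [nthSmallest, nthSmallest, dif_pos hj, dif_pos (hij.trans hj)]
  exact (S.orderEmbOfFin rfl).strictMono hij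

theorem nthSmallest_add_sub_le {S : Finset ℕ} {i j : ℕ} (hij : i ≤ j) (hj : j < #S) :
    nthSmallest S i + (j - i) ≤ nthSmallest S j := by
  induction j, hij using Nat.le_induction with
  | base => simp
  | succ j hij ih =>
    have := nthSmallest_lt_nthSmallest (lt_add_one j) hj
    have := ih (by omega)
    omega

theorem nthSmallest_image_range {f : ℕ → ℕ} (hf : StrictMono f) {L k : ℕ} (hk : k < L) :
    nthSmallest ((range L).image f) k = f k := by
  have hcard : #((range L).image f) = L := by
    rw [card_image_of_injective _ hf.injective, card_range]
  have huniq := orderEmbOfFin_unique hcard (f := fun i : Fin L => f i)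
    (fun i => mem_image_of_mem f (mem_range.2 i.2)) (fun i j h => hf h)
  rw [nthSmallest, dif_pos (by rwa [hcard]), ← congrFun huniq.symm ⟨k, hk⟩]
  simp only [orderEmbOfFin_apply, Fin.getElem_fin]

theorem card_symmDiff_Ico_le (a b c d : ℕ) :
    #(symmDiff (Ico a b) (Ico c d)) ≤ a.dist c + b.dist d := by
  have hsub : symmDiff (Ico a b) (Ico c d) ⊆
      Ico (min a c) (max a c) ∪ Ico (min b d) (max b d) := by
    intro x hx
    simp only [mem_symmDiff, mem_Ico, mem_union] at hx ⊢
    omega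
  refine (card_le_card hsub).trans ((card_union_le _ _).trans ?_)
  simp only [Nat.card_Ico, Nat.dist]
  omega

def Aligned {α : Type*} (u v : List α) (S T : Finset ℕ) : Prop :=
  ∀ k < #S, u[nthSmallest S k]? = v[nthSmallest T k]?

theorem List.Sublist.exists_nthSmallest {α : Type*} {w u : List α} (h : w.Sublist u) :
    ∃ S : Finset ℕ, S ⊆ Finset.range u.length ∧ #S = w.length ∧
      ∀ k < w.length, u[nthSmallest S k]? = w[k]? := by
  obtain ⟨f, hf⟩ := List.sublist_iff_exists_orderEmbedding_getElem?_eq.mp h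
  refine ⟨(Finset.range w.length).image f, fun i hi => ?_,
    (card_image_of_injective _ f.injective).trans (card_range _), fun k hk => ?_⟩
  · obtain ⟨k, hk, rfl⟩ := mem_image.1 hi
    have hfk := hf k
    rw [List.getElem?_eq_getElem (mem_range.1 hk)] at hfk
    exact mem_range.2 (List.getElem?_eq_some_iff.1 hfk.symm).1
  · rw [nthSmallest_image_range f.strictMono hk, hf]

theorem exists_sublist_length_eq_lcsLen (u v : List Bool) :
    ∃ w : List Bool, w.length = lcsLen u v ∧ w.Sublist u ∧ w.Sublist v :=
  Nat.findGreatest_spec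
    (P := fun k => ∃ w : List Bool, w.length = k ∧ w.Sublist u ∧ w.Sublist v) (Nat.zero_le _)
    ⟨[], rfl, List.nil_sublist _, List.nil_sublist _⟩

theorem length_lt_add_of_editDist_lt {u v : List Bool} {t : ℕ} (h : editDist u v < t) :
    v.length < u.length + t := by
  have : lcsLen u v ≤ min u.length v.length := Nat.findGreatest_le _
  unfold editDist at h
  omega

theorem exists_aligned_of_editDist_lt {u v : List Bool} {t : ℕ} (h : editDist u v < t) :
    ∃ S T : Finset ℕ, S ⊆ range u.length ∧ T ⊆ range v.length ∧ #S = #T ∧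
      u.length + v.length < t + 2 * #S ∧ Aligned u v S T := by
  obtain ⟨w, hw, hwu, hwv⟩ := exists_sublist_length_eq_lcsLen u v
  obtain ⟨S, hSu, hSw, hS⟩ := hwu.exists_nthSmallest
  obtain ⟨T, hTv, hTw, hT⟩ := hwv.exists_nthSmallest
  refine ⟨S, T, hSu, hTv, hSw.trans hTw.symm, ?_,
    fun k hk => (hS k (hSw ▸ hk)).trans (hT k (hSw ▸ hk)).symm⟩
  unfold editDist at h
  omega

theorem card_symmDiff_Ico_le_of_fixedPoint {a s a' s' k : ℕ} {S T : Finset ℕ}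
    (hS : S ⊆ range s) (hT : T ⊆ range s') (hST : #S = #T) (hk : k < #S)
    (hfix : a + nthSmallest S k = a' + nthSmallest T k) :
    #(symmDiff (Ico a (a + s)) (Ico a' (a' + s'))) ≤ s + s' - 2 * #S := by
  have hS₀ := nthSmallest_add_sub_le (S := S) (Nat.zero_le k) hk
  have hT₀ := nthSmallest_add_sub_le (S := T) (Nat.zero_le k) (hST ▸ hk)
  have hS₁ := nthSmallest_add_sub_le (S := S) (i := k) (j := #S - 1) (by omega) (by omega)
  have hT₁ := nthSmallest_add_sub_le (S := T) (i := k) (j := #S - 1) (by omega) (by omega)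
  have hSs := mem_range.1 (hS (nthSmallest_mem (S := S) (k := #S - 1) (by omega)))
  have hTs := mem_range.1 (hT (nthSmallest_mem (S := T) (k := #S - 1) (by omega)))
  have := card_symmDiff_Ico_le a (a + s) a' (a' + s')
  unfold Nat.dist at this
  omega

theorem length_subwordF {n : ℕ} (x : Fin n → Bool) (a len : ℕ) :
    (subwordF x a len).length = len := by
  simp [subwordF]

theorem getElem?_subwordF {n : ℕ} (x : Fin n → Bool) {a len j : ℕ} (hj : j < len)
    (h : a + j < n) : (subwordF x a len)[j]? = some (x ⟨a + j, h⟩) := by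
  simp [subwordF, hj, h]

theorem card_aligned_subwordF_le {n a s a' s' : ℕ} {S T : Finset ℕ} (ha : a + s ≤ n)
    (ha' : a' + s' ≤ n) (hS : S ⊆ range s) (hT : T ⊆ range s') (hST : #S = #T)
    (hne : ∀ k < #S, a + nthSmallest S k ≠ a' + nthSmallest T k) :
    #{x : Fin n → Bool | Aligned (subwordF x a s) (subwordF x a' s') S T} ≤ 2 ^ (n - #S) := by
  have hSs (i : Fin #S) : nthSmallest S i < s := mem_range.1 (hS (nthSmallest_mem i.2))
  have hTs (i : Fin #S) : nthSmallest T i < s' :=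
    mem_range.1 (hT (nthSmallest_mem (hST ▸ i.2)))
  let p (i : Fin #S) : Fin n := ⟨a + nthSmallest S i, by have := hSs i; omega⟩
  let q (i : Fin #S) : Fin n := ⟨a' + nthSmallest T i, by have := hTs i; omega⟩
  have hp : StrictMono p := fun i j hij => by
    simpa [p, Fin.lt_def] using nthSmallest_lt_nthSmallest hij j.2
  have hq : StrictMono q := fun i j hij => by
    simpa [q, Fin.lt_def] using nthSmallest_lt_nthSmallest hij (hST ▸ j.2)
  have hmax : StrictMono fun i => max (p i) (q i) := fun i j hij =>
    max_lt (lt_max_of_lt_left (hp hij)) (lt_max_of_lt_right (hq hij))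
  have hmin (i : Fin #S) : min (p i) (q i) < max (p i) (q i) :=
    min_lt_max.2 fun h => hne i i.2 (congrArg Fin.val h)
  refine (card_le_card fun x hx => ?_).trans
    ((card_filter_forall_eq_le (β := Bool) hmax.injective hmin).trans_eq (by simp))
  simp only [mem_filter, mem_univ, true_and] at hx ⊢
  intro i
  have hxi : x (p i) = x (q i) := by
    have := hx i i.2
    rwa [getElem?_subwordF x (hSs i), getElem?_subwordF x (hTs i), Option.some_inj] at this
  rcases le_total (p i) (q i) with h | h <;> simp [h, hxi]

theorem card_editDist_lt_le {n t a s a' s' : ℕ} (ha : a + s ≤ n) (ha' : a' + s' ≤ n)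
    (hsd : t ≤ #(symmDiff (Ico a (a + s)) (Ico a' (a' + s')))) :
    #{x : Fin n → Bool | editDist (subwordF x a s) (subwordF x a' s') < t} ≤
      #{S ∈ (range s).powerset | s + 1 - t ≤ #S} *
        #{T ∈ (range s').powerset | s' + 1 - t ≤ #T} * 2 ^ (n - (s + 1 - t)) := by
  set Idx := ({S ∈ (range s).powerset | s + 1 - t ≤ #S} ×ˢ
    {T ∈ (range s').powerset | s' + 1 - t ≤ #T}).filter
      fun ST => #ST.1 = #ST.2 ∧ ∀ k < #ST.1, a + nthSmallest ST.1 k ≠ a' + nthSmallest ST.2 k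
  have hcover :
      ({x | editDist (subwordF x a s) (subwordF x a' s') < t} : Finset (Fin n → Bool)) ⊆
        Idx.biUnion fun ST => {x | Aligned (subwordF x a s) (subwordF x a' s') ST.1 ST.2} := by
    intro x hx
    obtain ⟨S, T, hS, hT, hST, hlen, hal⟩ := exists_aligned_of_editDist_lt (mem_filter.1 hx).2
    simp only [length_subwordF] at hS hT hlen
    have hSs := card_range s ▸ card_le_card hS
    have hTs := card_range s' ▸ card_le_card hT
    simp only [Idx, mem_biUnion, mem_filter, mem_product, mem_powerset, mem_univ, true_and,
      Prod.exists]
    refine ⟨S, T, ⟨⟨⟨hS, by omega⟩, hT, by omega⟩, hST, fun k hk hfix => ?_⟩, hal⟩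
    have := card_symmDiff_Ico_le_of_fixedPoint hS hT hST hk hfix
    omega
  calc _ ≤ _ := card_le_card hcover
    _ ≤ ∑ ST ∈ Idx,
          #{x : Fin n → Bool | Aligned (subwordF x a s) (subwordF x a' s') ST.1 ST.2} :=
        card_biUnion_le
    _ ≤ ∑ _ST ∈ Idx, 2 ^ (n - (s + 1 - t)) := sum_le_sum fun ST hST => by
        simp only [Idx, mem_filter, mem_product, mem_powerset] at hST
        obtain ⟨⟨⟨hS, hSc⟩, hT, -⟩, hST, hne⟩ := hST
        exact (card_aligned_subwordF_le ha ha' hS hT hST hne).trans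
          (Nat.pow_le_pow_right two_pos (by omega))
    _ ≤ _ := by
        rw [sum_const, smul_eq_mul, ← card_product]
        exact Nat.mul_le_mul_right _ (card_filter_le _ _)

theorem sixtyFive_pow_mul_le {s s' t : ℕ} (hs : 25 * t ≤ s) (hs' : s' < s + t) :
    65 ^ s * 65 ^ s' * 2 ^ (5 * t) ≤ 64 ^ (s + 1 - t) * 64 ^ (s' + 1 - t) * 2 ^ (s + 1 - t) := by
  have h64 : ∀ m, (64 : ℕ) ^ m = 2 ^ (6 * m) := fun m => by rw [pow_mul]; norm_num
  rw [h64, h64, ← Nat.pow_le_pow_iff_left (by norm_num : 16 ≠ 0)]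
  calc (65 ^ s * 65 ^ s' * 2 ^ (5 * t)) ^ 16 = 65 ^ (16 * (s + s')) * 2 ^ (80 * t) := by ring
    _ ≤ 2 ^ (97 * (s + s')) * 2 ^ (80 * t) := by
        rw [pow_mul 65, pow_mul 2 97]
        exact Nat.mul_le_mul_right _ (Nat.pow_le_pow_left (by norm_num) _)
    _ ≤ 2 ^ (16 * (7 * (s + 1 - t) + 6 * (s' + 1 - t))) := by
        rw [← pow_add]; exact Nat.pow_le_pow_right (by norm_num) (by omega)
    _ = (2 ^ (6 * (s + 1 - t)) * 2 ^ (6 * (s' + 1 - t)) * 2 ^ (s + 1 - t)) ^ 16 := by ring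

theorem card_editDist_lt_mul_pow_le {n t a s a' s' : ℕ} (ha : a + s ≤ n) (ha' : a' + s' ≤ n)
    (hlen : 25 * t ≤ s) (hsd : t ≤ #(symmDiff (Ico a (a + s)) (Ico a' (a' + s')))) :
    #{x : Fin n → Bool | editDist (subwordF x a s) (subwordF x a' s') < t} * 2 ^ (5 * t) ≤
      2 ^ n := by
  set E : Finset (Fin n → Bool) := {x | editDist (subwordF x a s) (subwordF x a' s') < t}
  obtain hE | ⟨x, hx⟩ := E.eq_empty_or_nonempty
  · simp [hE]
  have ht : 0 < t := (Nat.zero_le _).trans_lt (mem_filter.1 hx).2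
  have hs' := length_lt_add_of_editDist_lt (mem_filter.1 hx).2
  rw [length_subwordF, length_subwordF] at hs'
  set u := s + 1 - t
  set u' := s' + 1 - t
  have hweight (m k : ℕ) := card_large_subsets_mul_pow_le (range m) (r := 64) (by norm_num) k
  simp only [card_range] at hweight
  refine Nat.le_of_mul_le_mul_right (c := 64 ^ u * 64 ^ u' * 2 ^ u) ?_ (by positivity)
  calc #E * 2 ^ (5 * t) * (64 ^ u * 64 ^ u' * 2 ^ u)
      ≤ #{S ∈ (range s).powerset | u ≤ #S} * #{T ∈ (range s').powerset | u' ≤ #T} *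
          2 ^ (n - u) * 2 ^ (5 * t) * (64 ^ u * 64 ^ u' * 2 ^ u) := by
        gcongr; exact card_editDist_lt_le ha ha' hsd
    _ = (#{S ∈ (range s).powerset | u ≤ #S} * 64 ^ u) *
          (#{T ∈ (range s').powerset | u' ≤ #T} * 64 ^ u') * 2 ^ (5 * t) *
          (2 ^ (n - u) * 2 ^ u) := by
        ring
    _ ≤ 65 ^ s * 65 ^ s' * 2 ^ (5 * t) * (2 ^ (n - u) * 2 ^ u) := by
        gcongr <;> apply hweight
    _ ≤ 64 ^ u * 64 ^ u' * 2 ^ u * (2 ^ (n - u) * 2 ^ u) :=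
        Nat.mul_le_mul_right _ (sixtyFive_pow_mul_le hlen hs')
    _ = 2 ^ n * (64 ^ u * 64 ^ u' * 2 ^ u) := by
        rw [← pow_add 2 (n - u), Nat.sub_add_cancel (show s + 1 - t ≤ n by omega)]; ring

theorem stmt2_general (n t a s a' s' : ℕ)
    (ha : a + s ≤ n) (ha' : a' + s' ≤ n)
    (hlen : 25 * t ≤ s)
    (hsd : t ≤ (symmDiff (Finset.Ico a (a + s)) (Finset.Ico a' (a' + s'))).card) :
    (Nat.card {x : Fin n → Bool // editDist (subwordF x a s) (subwordF x a' s') < t} : ℝ)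
        / 2 ^ n
      ≤ (1 / 2 : ℝ) ^ (5 * t) := by
  rw [Nat.card_eq_fintype_card, Fintype.card_subtype, div_le_iff₀ (by positivity), one_div,
    inv_pow, inv_mul_eq_div, le_div_iff₀ (by positivity)]
  exact_mod_cast card_editDist_lt_mul_pow_le ha ha' hlen hsd

/-- For intervals I = [a, a+s), I' = [a', a'+s') in [0,n) with
|I| ≥ 25t and |I △ I'| ≥ t, the probability over a uniformly random
x ∈ {0,1}^n that d_edit(x_I, x_{I'}) < t is at most 2^{-5t}. -/
theorem stmt2 (n t a s a' s' : ℕ) (ht : 0 < t)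
    (ha : a + s ≤ n) (ha' : a' + s' ≤ n)
    (hlen : 25 * t ≤ s)
    (hsd : t ≤ (symmDiff (Finset.Ico a (a + s)) (Finset.Ico a' (a' + s'))).card) :
    (Nat.card {x : Fin n → Bool // editDist (subwordF x a s) (subwordF x a' s') < t} : ℝ)
        / 2 ^ n
      ≤ (1 / 2 : ℝ) ^ (5 * t) :=
  stmt2_general n t a s a' s' ha ha' hlen hsd
end

section
/- If d_edit(x_I, x_{I'}) < t for two intervals I, I' with |I △ I'| ≥ t, and J ⊆ I, J' ⊆ I' are sets with |J| + |J'| < t, |I \ J| = |I' \ J'|, and x_{I\J} = x_{I'\J'}, then writing I \ J as i_1 < i_2 < ... and I' \ J' as j_1 < j_2 < ..., we have i_k ≠ j_k for every k. -/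
open Classical

/-- Subword of an infinite boolean string starting at `a` of length `len`. -/
def subword (x : ℕ → Bool) (a len : ℕ) : List Bool :=
  (List.range len).map fun k => x (a + k)

lemma stmt3_aux (S : Finset ℕ) {m : ℕ} (hm : S.card = m) (k : Fin m) :
    (S.filter (fun e => e < (S.orderIsoOfFin hm k : ℕ))).card = (k : ℕ) ∧
    (S.filter (fun e => ((S.orderIsoOfFin hm k : ℕ)) < e)).card = m - 1 - (k : ℕ) := by
  set f := S.orderIsoOfFin hm with hf
  have hinj : Function.Injective (fun j : Fin m => ((f j : ℕ))) := by
    intro j1 j2 h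
    exact f.injective (Subtype.ext h)
  have h1 : S.filter (fun e => e < (f k : ℕ)) = (Finset.Iio k).image (fun j => ((f j : ℕ))) := by
    ext e
    simp only [Finset.mem_filter, Finset.mem_image, Finset.mem_Iio]
    constructor
    · rintro ⟨he, hlt⟩
      refine ⟨f.symm ⟨e, he⟩, ?_, by simp⟩
      rw [← f.lt_iff_lt, f.apply_symm_apply]
      exact Subtype.mk_lt_mk.mpr hlt
    · rintro ⟨j, hj, rfl⟩
      exact ⟨(f j).2, Subtype.coe_lt_coe.mpr (f.lt_iff_lt.mpr hj)⟩
  have h2 : S.filter (fun e => (f k : ℕ) < e) = (Finset.Ioi k).image (fun j => ((f j : ℕ))) := by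
    ext e
    simp only [Finset.mem_filter, Finset.mem_image, Finset.mem_Ioi]
    constructor
    · rintro ⟨he, hlt⟩
      refine ⟨f.symm ⟨e, he⟩, ?_, by simp⟩
      rw [← f.lt_iff_lt, f.apply_symm_apply]
      exact Subtype.mk_lt_mk.mpr hlt
    · rintro ⟨j, hj, rfl⟩
      exact ⟨(f j).2, Subtype.coe_lt_coe.mpr (f.lt_iff_lt.mpr hj)⟩
  constructor
  · rw [h1, Finset.card_image_of_injective _ hinj, Fin.card_Iio]
  · rw [h2, Finset.card_image_of_injective _ hinj, Fin.card_Ioi]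

open Classical

section
variable (x : ℕ → Bool)

/-- Counting lemma used in the main proof: below/above counts for
the k-th element of a finset of naturals. -/
lemma stmt3_count (a s : ℕ) (J : Finset ℕ) (hJ : J ⊆ Finset.Ico a (a + s))
    {m : ℕ} (hm : (Finset.Ico a (a + s) \ J).card = m) (k : Fin m)
    (c : ℕ) (hc : c = ((Finset.Ico a (a + s) \ J).orderIsoOfFin hm k : ℕ)) :
    ∃ b₁ a₁ : ℕ, b₁ + a₁ ≤ J.card ∧ a ≤ c ∧ c < a + s ∧
      c - a = (k : ℕ) + b₁ ∧ (a + s) - (c + 1) = (m - 1 - (k : ℕ)) + a₁ := by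
  set S := Finset.Ico a (a + s) \ J with hS
  have hmem : c ∈ S := by rw [hc]; exact ((S.orderIsoOfFin hm) k).2
  have hmemI : c ∈ Finset.Ico a (a + s) := (Finset.mem_sdiff.mp hmem).1
  have hcJ : c ∉ J := (Finset.mem_sdiff.mp hmem).2
  obtain ⟨hac, hcs⟩ := Finset.mem_Ico.mp hmemI
  obtain ⟨hlt, hgt⟩ := stmt3_aux S hm k
  rw [← hc] at hlt hgt
  refine ⟨(J.filter (fun e => e < c)).card, (J.filter (fun e => c < e)).card, ?_, hac, hcs, ?_, ?_⟩
  · have hdisj : Disjoint (J.filter (fun e => e < c)) (J.filter (fun e => c < e)) := by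
      rw [Finset.disjoint_left]
      intro e h1 h2
      simp only [Finset.mem_filter] at h1 h2
      omega
    rw [← Finset.card_union_of_disjoint hdisj]
    apply Finset.card_le_card
    intro e he
    simp only [Finset.mem_union, Finset.mem_filter] at he
    tauto
  · -- below count
    have hsplit : (Finset.Ico a (a + s)).filter (fun e => e < c)
        = S.filter (fun e => e < c) ∪ J.filter (fun e => e < c) := by
      ext e
      simp only [Finset.mem_filter, Finset.mem_union, hS, Finset.mem_sdiff]
      have := @hJ e
      simp only [Finset.mem_Ico] at this ⊢
      tauto
    have hico : (Finset.Ico a (a + s)).filter (fun e => e < c) = Finset.Ico a c := by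
      ext e; simp only [Finset.mem_filter, Finset.mem_Ico]; omega
    have hdisj : Disjoint (S.filter (fun e => e < c)) (J.filter (fun e => e < c)) := by
      apply Finset.disjoint_filter_filter
      exact Finset.sdiff_disjoint
    have := congrArg Finset.card hsplit
    rw [hico, Finset.card_union_of_disjoint hdisj, Nat.card_Ico, hlt] at this
    omega
  · -- above count
    have hsplit : (Finset.Ico a (a + s)).filter (fun e => c < e)
        = S.filter (fun e => c < e) ∪ J.filter (fun e => c < e) := by
      ext e
      simp only [Finset.mem_filter, Finset.mem_union, hS, Finset.mem_sdiff]
      have := @hJ e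
      simp only [Finset.mem_Ico] at this ⊢
      tauto
    have hico : (Finset.Ico a (a + s)).filter (fun e => c < e) = Finset.Ico (c + 1) (a + s) := by
      ext e; simp only [Finset.mem_filter, Finset.mem_Ico]; omega
    have hdisj : Disjoint (S.filter (fun e => c < e)) (J.filter (fun e => c < e)) := by
      apply Finset.disjoint_filter_filter
      exact Finset.sdiff_disjoint
    have := congrArg Finset.card hsplit
    rw [hico, Finset.card_union_of_disjoint hdisj, Nat.card_Ico, hgt] at this
    omega

end

/-- If d_edit(x_I, x_{I'}) < t for intervals I = [a,a+s),
I' = [a',a'+s') with |I △ I'| ≥ t, and J ⊆ I, J' ⊆ I' satisfy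
|J| + |J'| < t, |I \ J| = |I' \ J'| = m, and x restricted to I \ J equals
x restricted to I' \ J' (as sequences, in increasing order of indices),
then the k-th elements of I \ J and I' \ J' differ for every k. -/
theorem stmt3 (x : ℕ → Bool) (a s a' s' t m : ℕ)
    (hsd : t ≤ (symmDiff (Finset.Ico a (a + s)) (Finset.Ico a' (a' + s'))).card)
    (hed : editDist (subword x a s) (subword x a' s') < t)
    (J J' : Finset ℕ)
    (hJ : J ⊆ Finset.Ico a (a + s)) (hJ' : J' ⊆ Finset.Ico a' (a' + s'))
    (hcard : J.card + J'.card < t)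
    (hm : (Finset.Ico a (a + s) \ J).card = m)
    (hm' : (Finset.Ico a' (a' + s') \ J').card = m)
    (hmatch : ∀ k : Fin m,
      x (((Finset.Ico a (a + s) \ J).orderIsoOfFin hm k : ℕ))
        = x (((Finset.Ico a' (a' + s') \ J').orderIsoOfFin hm' k : ℕ))) :
    ∀ k : Fin m,
      (((Finset.Ico a (a + s) \ J).orderIsoOfFin hm k : ℕ))
        ≠ (((Finset.Ico a' (a' + s') \ J').orderIsoOfFin hm' k : ℕ)) := by
  intro k heq
  set c : ℕ := ((Finset.Ico a (a + s) \ J).orderIsoOfFin hm k : ℕ) with hc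
  obtain ⟨b₁, a₁, hb1, hac, hcs, hbelow, habove⟩ := stmt3_count a s J hJ hm k c hc
  obtain ⟨b₂, a₂, hb2, hac', hcs', hbelow', habove'⟩ := stmt3_count a' s' J' hJ' hm' k c heq
  -- bound the symmetric difference
  have hsub : symmDiff (Finset.Ico a (a + s)) (Finset.Ico a' (a' + s'))
      ⊆ Finset.Ico a a' ∪ Finset.Ico (a' + s') (a + s)
        ∪ Finset.Ico a' a ∪ Finset.Ico (a + s) (a' + s') := by
    intro e he
    rw [Finset.mem_symmDiff] at he
    simp only [Finset.mem_union, Finset.mem_sdiff, Finset.mem_Ico] at he ⊢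
    omega
  have hsd2 := Finset.card_le_card hsub
  have hu1 := Finset.card_union_le
    (Finset.Ico a a' ∪ Finset.Ico (a' + s') (a + s) ∪ Finset.Ico a' a)
    (Finset.Ico (a + s) (a' + s'))
  have hu2 := Finset.card_union_le (Finset.Ico a a' ∪ Finset.Ico (a' + s') (a + s))
    (Finset.Ico a' a)
  have hu3 := Finset.card_union_le (Finset.Ico a a') (Finset.Ico (a' + s') (a + s))
  have e1 : (Finset.Ico a a').card = a' - a := Nat.card_Ico _ _
  have e2 : (Finset.Ico (a' + s') (a + s)).card = (a + s) - (a' + s') := Nat.card_Ico _ _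
  have e3 : (Finset.Ico a' a).card = a - a' := Nat.card_Ico _ _
  have e4 : (Finset.Ico (a + s) (a' + s')).card = (a' + s') - (a + s) := Nat.card_Ico _ _
  have hk := k.isLt
  omega
end

section
/- Let p < 1/2 be the optimal failure probability for distinguishing D_0 from D_1 given M samples (uniform prior on b∈{0,1}). For uniformly random z ∈ {0,1}^B, any algorithm that receives M i.i.d. samples from the product distribution D_z = D_{z_1} × ... × D_{z_B} and outputs ẑ ∈ {0,1}^B satisfies Pr[ẑ = z] ≤ (1−p)^B. -/
/-- Binomial probability: Pr[Bin(n,p) = k]. -/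
noncomputable def binomP (n : ℕ) (p : ℝ) (k : ℕ) : ℝ :=
  (n.choose k : ℝ) * p ^ k * (1 - p) ^ (n - k)

/-- The pair distribution D_b on ℕ × ℕ. -/
noncomputable def atomD (δ : ℝ) (M : ℕ) (b : Bool) (s : ℕ × ℕ) : ℝ :=
  if b then binomP (M + 1) (1 - δ) s.1 * binomP M (1 - δ) s.2
  else binomP M (1 - δ) s.1 * binomP (M + 1) (1 - δ) s.2

/-- Failure probability of an M-sample distinguishing algorithm (uniform prior). -/
noncomputable def failProb (δ : ℝ) (M : ℕ) (A : (Fin M → ℕ × ℕ) → Bool) : ℝ :=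
  (1 / 2) * ∑' s : Fin M → ℕ × ℕ,
    ((if A s = true then ∏ m, atomD δ M false (s m) else 0)
      + (if A s = false then ∏ m, atomD δ M true (s m) else 0))

/-! The best single-coordinate test is the likelihood-ratio test, whose error is half of
`∑ min (P₀, P₁)`; since `max + min = P₀ + P₁`, the hypothesis gives `∑ max (P₀, P₁) ≤ 2 (1 - p)`.
On a sample `u` of the `B`-fold problem a decoder collects mass at most
`∏ b, max (P₀ (u b), P₁ (u b))`, and summing this over all samples gives
`(∑ max (P₀, P₁)) ^ B ≤ (2 (1 - p)) ^ B`, which the uniform prior `2⁻ᴮ` turns into `(1 - p) ^ B`. -/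

theorem HasSum.mul_of_nonneg {ι κ : Type*} {f : ι → ℝ} {g : κ → ℝ} {a b : ℝ}
    (hf : HasSum f a) (hg : HasSum g b) (hf0 : 0 ≤ f) (hg0 : 0 ≤ g) :
    HasSum (fun x : ι × κ ↦ f x.1 * g x.2) (a * b) :=
  hf.mul hg (hf.summable.mul_of_nonneg hg.summable hf0 hg0)

theorem hasSum_fin_pi_prod {α : Type*} : ∀ {n : ℕ} {f : Fin n → α → ℝ} {a : Fin n → ℝ},
    (∀ i, 0 ≤ f i) → (∀ i, HasSum (f i) (a i)) →
    HasSum (fun s : Fin n → α ↦ ∏ i, f i (s i)) (∏ i, a i)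
  | 0, f, a, _, _ => by simp
  | n + 1, f, a, hf0, hf => by
    have htail := hasSum_fin_pi_prod (fun i ↦ hf0 i.succ) (fun i ↦ hf i.succ)
    rw [← (Fin.consEquiv fun _ ↦ α).hasSum_iff, Fin.prod_univ_succ]
    simpa [Function.comp_def, Fin.consEquiv, Fin.prod_univ_succ] using
      (hf 0).mul_of_nonneg htail (hf0 0) fun s ↦ Finset.prod_nonneg fun i _ ↦ hf0 i.succ (s i)

theorem hasSum_pi_prod {ι α : Type*} [Fintype ι] {f : ι → α → ℝ} {a : ι → ℝ}
    (hf0 : ∀ i, 0 ≤ f i) (hf : ∀ i, HasSum (f i) (a i)) :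
    HasSum (fun s : ι → α ↦ ∏ i, f i (s i)) (∏ i, a i) := by
  let e := Fintype.equivFin ι
  have h := hasSum_fin_pi_prod (fun j ↦ hf0 (e.symm j)) fun j ↦ hf (e.symm j)
  rw [← (Equiv.piCongrLeft' (fun _ ↦ α) e).symm.hasSum_iff, ← e.symm.prod_comp]
  convert h using 2 with t
  simpa using (e.symm.prod_comp fun i ↦ f i (t (e i))).symm

section BinaryTest

variable {α : Type*}

noncomputable def testError (P : Bool → α → ℝ) (A : α → Bool) : ℝ :=
  (1 / 2) * ∑' x, P (!A x) x

noncomputable def likelihoodTest (P : Bool → α → ℝ) (x : α) : Bool :=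
  decide (P false x ≤ P true x)

theorem apply_not_likelihoodTest (P : Bool → α → ℝ) (x : α) :
    P (!likelihoodTest P x) x = min (P false x) (P true x) := by
  by_cases h : P false x ≤ P true x
  · simp [likelihoodTest, h]
  · simp [likelihoodTest, h, min_eq_right (le_of_not_ge h)]

theorem tsum_max_le_of_le_testError {P : Bool → α → ℝ} {p : ℝ} (hP0 : ∀ c, 0 ≤ P c)
    (hP1 : ∀ c, HasSum (P c) 1) (hopt : ∀ A, p ≤ testError P A) :
    ∑' x, max (P false x) (P true x) ≤ 2 * (1 - p) := by
  have hmin :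
      HasSum (fun x ↦ min (P false x) (P true x)) (2 * testError P (likelihoodTest P)) := by
    have hs : Summable fun x ↦ min (P false x) (P true x) :=
      (hP1 false).summable.of_nonneg_of_le (fun x ↦ le_min (hP0 _ x) (hP0 _ x))
        fun x ↦ min_le_left _ _
    convert hs.hasSum using 1
    simp [testError, apply_not_likelihoodTest]
  have hmax : HasSum (fun x ↦ max (P false x) (P true x))
      (1 + 1 - 2 * testError P (likelihoodTest P)) :=
    (((hP1 false).add (hP1 true)).sub hmin).congr_fun fun x ↦ by
      linarith [min_add_max (P false x) (P true x)]
  linarith [hmax.tsum_eq, hopt (likelihoodTest P)]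

theorem sum_tsum_ite_eq_prod_le_tsum_max_pow {ι : Type*} [Fintype ι] [DecidableEq ι]
    {P : Bool → α → ℝ} (hP0 : ∀ c, 0 ≤ P c) (hP : ∀ c, Summable (P c)) (D : (ι → α) → ι → Bool) :
    ∑ z, ∑' u, (if D u = z then ∏ i, P (z i) (u i) else 0)
      ≤ (∑' x, max (P false x) (P true x)) ^ Fintype.card ι := by
  set Pmax := fun x : α ↦ max (P false x) (P true x)
  have hmax0 : 0 ≤ Pmax := fun x ↦ le_max_of_le_left (hP0 false x)
  have hmax : HasSum (fun u : ι → α ↦ ∏ i, Pmax (u i)) ((∑' x, Pmax x) ^ Fintype.card ι) := by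
    simpa using hasSum_pi_prod (fun _ ↦ hmax0)
      fun _ ↦ (((hP false).add (hP true)).of_nonneg_of_le hmax0 fun x ↦
        max_le_add_of_nonneg (hP0 _ x) (hP0 _ x)).hasSum
  have hprod0 (z : ι → Bool) (u : ι → α) : 0 ≤ ∏ i, P (z i) (u i) :=
    Finset.prod_nonneg fun i _ ↦ hP0 _ _
  have hprod_le (z : ι → Bool) (u : ι → α) : ∏ i, P (z i) (u i) ≤ ∏ i, Pmax (u i) :=
    Finset.prod_le_prod (fun i _ ↦ hP0 _ _) fun i _ ↦ by
      cases z i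
      · exact le_max_left _ _
      · exact le_max_right _ _
  have hterm (z : ι → Bool) : Summable fun u ↦ if D u = z then ∏ i, P (z i) (u i) else 0 :=
    hmax.summable.of_nonneg_of_le (fun u ↦ by split_ifs <;> simp [hprod0]) fun u ↦ by
      split_ifs
      exacts [hprod_le z u, Finset.prod_nonneg fun i _ ↦ hmax0 _]
  rw [← Summable.tsum_finsetSum fun z _ ↦ hterm z]
  simp only [Finset.sum_ite_eq, Finset.mem_univ, if_true]
  exact hmax.tsum_eq ▸ Summable.tsum_le_tsum (fun u ↦ hprod_le _ u)
    (hmax.summable.of_nonneg_of_le (fun u ↦ hprod0 _ u) fun u ↦ hprod_le _ u) hmax.summable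

end BinaryTest

theorem binomP_nonneg (n : ℕ) {q : ℝ} (hq0 : 0 ≤ q) (hq1 : q ≤ 1) (k : ℕ) :
    0 ≤ binomP n q k := by
  have : 0 ≤ 1 - q := sub_nonneg.2 hq1
  unfold binomP
  positivity

theorem hasSum_binomP (n : ℕ) (q : ℝ) : HasSum (binomP n q) 1 := by
  have hvanish : ∀ k ∉ Finset.range (n + 1), binomP n q k = 0 := fun k hk ↦ by
    simp [binomP, Nat.choose_eq_zero_of_lt (by simpa using hk : n < k)]
  suffices ∑ k ∈ Finset.range (n + 1), binomP n q k = 1 by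
    simpa [this] using hasSum_sum_of_ne_finset_zero hvanish
  rw [show (1 : ℝ) = (q + (1 - q)) ^ n by ring, add_pow]
  exact Finset.sum_congr rfl fun k _ ↦ by simp only [binomP]; ring

theorem atomD_nonneg {δ : ℝ} (hδ0 : 0 ≤ δ) (hδ1 : δ ≤ 1) (M : ℕ) (b : Bool) :
    0 ≤ atomD δ M b := fun s ↦ by
  have h (n : ℕ) : 0 ≤ binomP n (1 - δ) := binomP_nonneg n (by linarith) (by linarith)
  cases b <;> exact mul_nonneg (h _ _) (h _ _)

theorem hasSum_atomD {δ : ℝ} (hδ0 : 0 ≤ δ) (hδ1 : δ ≤ 1) (M : ℕ) (b : Bool) :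
    HasSum (atomD δ M b) 1 := by
  have h (n : ℕ) : 0 ≤ binomP n (1 - δ) := binomP_nonneg n (by linarith) (by linarith)
  have hprod (m n : ℕ) :
      HasSum (fun s : ℕ × ℕ ↦ binomP m (1 - δ) s.1 * binomP n (1 - δ) s.2) 1 := by
    simpa using (hasSum_binomP m _).mul_of_nonneg (hasSum_binomP n _) (h m) (h n)
  cases b
  · exact hprod M (M + 1)
  · exact hprod (M + 1) M

theorem failProb_eq_testError (δ : ℝ) (M : ℕ) (A : (Fin M → ℕ × ℕ) → Bool) :
    failProb δ M A = testError (fun c s ↦ ∏ m, atomD δ M c (s m)) A := by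
  unfold failProb testError
  congr 1
  exact tsum_congr fun s ↦ by cases A s <;> simp

theorem stmt7_general (δ : ℝ) (M B : ℕ) (p : ℝ) (hδ0 : 0 < δ) (hδ1 : δ < 1)
    (hopt : ∀ A : (Fin M → ℕ × ℕ) → Bool, p ≤ failProb δ M A)
    (Ahat : (Fin M → Fin B → ℕ × ℕ) → (Fin B → Bool)) :
    ((2 : ℝ) ^ B)⁻¹ * ∑ z : Fin B → Bool, ∑' s : Fin M → Fin B → ℕ × ℕ,
        (if Ahat s = z then ∏ m, ∏ b, atomD δ M (z b) (s m b) else 0)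
      ≤ (1 - p) ^ B := by
  set P : Bool → (Fin M → ℕ × ℕ) → ℝ := fun c t ↦ ∏ m, atomD δ M c (t m)
  have hP0 (c : Bool) : 0 ≤ P c := fun t ↦
    Finset.prod_nonneg fun m _ ↦ atomD_nonneg hδ0.le hδ1.le M c _
  have hP1 (c : Bool) : HasSum (P c) 1 := by
    simpa using hasSum_pi_prod (fun _ ↦ atomD_nonneg hδ0.le hδ1.le M c)
      fun _ ↦ hasSum_atomD hδ0.le hδ1.le M c
  -- `Equiv.piComm` regroups the samples by coordinate.
  have htranspose (z : Fin B → Bool) :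
      ∑' s : Fin M → Fin B → ℕ × ℕ,
          (if Ahat s = z then ∏ m, ∏ b, atomD δ M (z b) (s m b) else 0)
        = ∑' u, (if Ahat (Equiv.piComm _ u) = z then ∏ b, P (z b) (u b) else 0) := by
    rw [← (Equiv.piComm _).tsum_eq]
    simp [P, Finset.prod_comm (s := Finset.univ (α := Fin M))]
  calc _ ≤ ((2 : ℝ) ^ B)⁻¹ * (∑' x, max (P false x) (P true x)) ^ B := by
        simp only [htranspose]
        gcongr
        simpa using sum_tsum_ite_eq_prod_le_tsum_max_pow hP0 (fun c ↦ (hP1 c).summable)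
          fun u ↦ Ahat (Equiv.piComm _ u)
    _ ≤ ((2 : ℝ) ^ B)⁻¹ * (2 * (1 - p)) ^ B := by
        gcongr
        · exact tsum_nonneg fun x ↦ le_max_of_le_left (hP0 false x)
        · exact tsum_max_le_of_le_testError hP0 hP1 fun A ↦ failProb_eq_testError δ M A ▸ hopt A
    _ = (1 - p) ^ B := by
        rw [mul_pow, ← mul_assoc, inv_mul_cancel₀ (by positivity), one_mul]

/-- if every M-sample algorithm for the atomic problem fails with
probability at least p < 1/2, then for a uniformly random z ∈ {0,1}^B, any
algorithm receiving M i.i.d. samples from D_z = D_{z_1} × ... × D_{z_B}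
recovers z exactly with probability at most (1-p)^B. -/
theorem stmt7 (δ : ℝ) (M B : ℕ) (p : ℝ) (hδ0 : 0 < δ) (hδ1 : δ < 1)
    (hp : p < 1 / 2)
    (hopt : ∀ A : (Fin M → ℕ × ℕ) → Bool, p ≤ failProb δ M A)
    (Ahat : (Fin M → Fin B → ℕ × ℕ) → (Fin B → Bool)) :
    ((2 : ℝ) ^ B)⁻¹ * ∑ z : Fin B → Bool, ∑' s : Fin M → Fin B → ℕ × ℕ,
        (if Ahat s = z then ∏ m, ∏ b, atomD δ M (z b) (s m b) else 0)
      ≤ (1 - p) ^ B :=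
  stmt7_general δ M B p hδ0 hδ1 hopt Ahat
end

section
/- In the idealized BMA process, if dist_ideal(t) = dist_ideal(t+1) = ... = dist_ideal(t+L) = k for some k with 1 ≤ k ≤ L/2, then the source string x̃ contains a k-desert of length L, i.e., x̃_{t+ℓ} = x̃_{t+k+ℓ} for all ℓ ∈ [0, L−1]. -/
/-- Surviving source positions under the deletion pattern `del`. -/
def traceIdx (R : ℕ) (del : ℕ → Bool) : List ℕ :=
  (List.range R).filter fun i => !(del i)

/-- Source position of the q-th trace symbol (padding maps to R, R+1, ...). -/
def srcF (R : ℕ) (del : ℕ → Bool) (q : ℕ) : ℕ :=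
  if q < (traceIdx R del).length then (traceIdx R del).getD q 0
  else R + (q - (traceIdx R del).length)

/-- The q-th trace symbol (`none` for padding). -/
def traceBit (R : ℕ) (xt del : ℕ → Bool) (q : ℕ) : Option Bool :=
  if q < (traceIdx R del).length then some (xt ((traceIdx R del).getD q 0)) else none

/-- The pointer of the idealized BMA process at step t. -/
def curPtr (R : ℕ) (xt del : ℕ → Bool) : ℕ → ℕ
  | 0 => 0
  | t + 1 =>
      if traceBit R xt del (curPtr R xt del t) = some (xt t)
      then curPtr R xt del t + 1 else curPtr R xt del t

theorem srcF_of_lt {R : ℕ} {del : ℕ → Bool} {q : ℕ} (hq : q < (traceIdx R del).length) :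
    srcF R del q = (traceIdx R del).getD q 0 :=
  if_pos hq

theorem xt_srcF_of_traceBit_eq_some {R : ℕ} {xt del : ℕ → Bool} {q : ℕ} {b : Bool}
    (h : traceBit R xt del q = some b) : xt (srcF R del q) = b := by
  unfold traceBit at h
  split at h
  case isTrue hq => rw [srcF_of_lt hq]; exact Option.some.inj h
  case isFalse => exact absurd h.symm (Option.some_ne_none b)

theorem curPtr_succ_of_traceBit_ne {R : ℕ} {xt del : ℕ → Bool} {s : ℕ}
    (h : traceBit R xt del (curPtr R xt del s) ≠ some (xt s)) :
    curPtr R xt del (s + 1) = curPtr R xt del s :=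
  if_neg h

/-- Without a match the pointer, hence its source position, stays put. -/
theorem xt_srcF_curPtr_of_srcF_ne {R : ℕ} {xt del : ℕ → Bool} {s : ℕ}
    (h : srcF R del (curPtr R xt del (s + 1)) ≠ srcF R del (curPtr R xt del s)) :
    xt (srcF R del (curPtr R xt del s)) = xt s := by
  by_contra hne
  refine h (congrArg _ (curPtr_succ_of_traceBit_ne fun hbit => hne ?_))
  exact xt_srcF_of_traceBit_eq_some hbit

theorem xt_eq_xt_add_of_dist_eq {R : ℕ} {xt del : ℕ → Bool} {s k : ℕ}
    (h₀ : srcF R del (curPtr R xt del s) = s + k)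
    (h₁ : srcF R del (curPtr R xt del (s + 1)) = s + 1 + k) :
    xt s = xt (s + k) := by
  have hmatch := xt_srcF_curPtr_of_srcF_ne (by omega : srcF R del (curPtr R xt del (s + 1)) ≠ _)
  rw [h₀] at hmatch
  exact hmatch.symm

theorem stmt14_general (R L k t : ℕ) (xt del : ℕ → Bool)
    (hconst : ∀ j ≤ L, srcF R del (curPtr R xt del (t + j)) = (t + j) + k) :
    ∀ l < L, xt (t + l) = xt (t + k + l) := by
  intro l hl
  rw [Nat.add_right_comm]
  exact xt_eq_xt_add_of_dist_eq (hconst l hl.le) (hconst (l + 1) hl)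

/-- in the idealized BMA process, if dist_ideal(t+j) = k for all
j = 0, 1, ..., L (with 1 ≤ k ≤ L/2), then the source string contains a
k-desert of length L starting at position t: x̃_{t+ℓ} = x̃_{t+k+ℓ} for all
ℓ ∈ [0, L-1]. -/
theorem stmt14 (R L k t : ℕ) (xt del : ℕ → Bool)
    (hk1 : 1 ≤ k) (hk2 : 2 * k ≤ L)
    (hconst : ∀ j ≤ L, srcF R del (curPtr R xt del (t + j)) = (t + j) + k) :
    ∀ l < L, xt (t + l) = xt (t + k + l) :=
  stmt14_general R L k t xt del hconst
end
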